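/- arXiv:2411.11246 — 6 statements merged into one kernel-verified Lean document; each statement's English description precedes it below -/
import Mathlib

section
/- Let G ⊂ ℝⁿ (n ≥ 1) be a convex body. Then there exists a constant C > 1 such that for all nonempty compact convex subsets K, L of G, (1/C)·d_H(K,L)ⁿ ≤ ρ_G(K,L) ≤ C·d_H(K,L). -/
open MeasureTheory Metric Pointwise

/-- `ρ_G(K,L) := 2·Vol(G + K ∪̃ L) − Vol(G + K) − Vol(G + L)`, where `K ∪̃ L` is the
closed convex hull of `K ∪ L` and `+` is the Minkowski sum. -/
noncomputable def rhoDist {n : ℕ} (G K L : Set (EuclideanSpace ℝ (Fin n))) : ℝ :=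
  2 * (volume (G + closure (convexHull ℝ (K ∪ L)))).toReal
    - (volume (G + K)).toReal - (volume (G + L)).toReal

/-!
Both bounds compare `G + K ∪̃ L` with `G + K` (and symmetrically with `G + L`); let `d` be the
Hausdorff distance of `K` and `L`.

Upper bound: `K ∪̃ L` lies in the `d`-neighbourhood `K + B(0, d)` of the convex set `K`. The convex
set `G + K` contains a ball `B(c, r)`, so `G + K + B(0, d)` lies in the dilation of `G + K` by the
factor `1 + d / r` about `c`, and its volume exceeds `Vol(G + K)` by at most
`((1 + d / r) ^ n - 1) Vol(G + K) = O(d)`.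

Lower bound: take `x ∈ L` at distance at least `d` from `K`, and a unit vector `u` with
`⟪u, k⟫ ≤ ⟪u, x⟫ - d` on `K`. If `p` maximizes `⟪u, ·⟫` on `G`, then `⟪u, ·⟫ ≤ ⟪u, p + x⟫ - d`
on `G + K`, while the translate by `x` of the homothetic copy `p + t (G - p)`,
`t = d / (2 diam G)`, lies in `G + K ∪̃ L` and has `⟪u, ·⟫ ≥ ⟪u, p + x⟫ - d / 2`. It adds the
volume `t ^ n Vol(G)`, of order `d ^ n`.
-/

open Module (finrank)
open scoped InnerProductSpace

theorem one_add_pow_sub_one_le {s s₀ : ℝ} (hs : 0 ≤ s) (hs₀ : s ≤ s₀) (N : ℕ) :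
    (1 + s) ^ N - 1 ≤ N * (1 + s₀) ^ (N - 1) * s := by
  have h := (le_abs_self _).trans (abs_pow_sub_pow_le (1 + s) 1 N)
  rw [one_pow, add_sub_cancel_left, abs_of_nonneg hs, abs_one,
    abs_of_nonneg (by linarith : 0 ≤ 1 + s), max_eq_left (by linarith)] at h
  calc (1 + s) ^ N - 1 ≤ s * N * (1 + s) ^ (N - 1) := h
    _ ≤ N * (1 + s₀) ^ (N - 1) * s := by
      rw [mul_comm s, mul_right_comm]
      gcongr

theorem hausdorffDist_le_diam_of_subset {α : Type*} [PseudoMetricSpace α] {s t u : Set α}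
    (hu : Bornology.IsBounded u) (hs : s.Nonempty) (ht : t.Nonempty) (hsu : s ⊆ u)
    (htu : t ⊆ u) :
    hausdorffDist s t ≤ diam u :=
  (hausdorffDist_le_diam hs (hu.subset hsu) ht (hu.subset htu)).trans
    (diam_mono (Set.union_subset hsu htu) hu)

theorem exists_mem_hausdorffDist_le_infDist {α : Type*} [PseudoMetricSpace α] {s t : Set α}
    (hs : IsCompact s) (hsne : s.Nonempty) (ht : IsCompact t) (htne : t.Nonempty) :
    (∃ x ∈ s, hausdorffDist s t ≤ infDist x t) ∨
      (∃ x ∈ t, hausdorffDist s t ≤ infDist x s) := by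
  obtain ⟨x, hx, hxmax⟩ := hs.exists_isMaxOn hsne (continuous_infDist_pt t).continuousOn
  obtain ⟨y, hy, hymax⟩ := ht.exists_isMaxOn htne (continuous_infDist_pt s).continuousOn
  have h : hausdorffDist s t ≤ max (infDist x t) (infDist y s) :=
    hausdorffDist_le_of_infDist (infDist_nonneg.trans (le_max_left _ _))
      (fun x' hx' => (hxmax hx').trans (le_max_left _ _))
      (fun y' hy' => (hymax hy').trans (le_max_right _ _))
  rcases le_max_iff.1 h with h | h
  · exact Or.inl ⟨x, hx, h⟩
  · exact Or.inr ⟨y, hy, h⟩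

section NormedSpace

variable {E : Type*} [NormedAddCommGroup E] [NormedSpace ℝ E]

theorem closure_convexHull_union_subset_cthickening {K L : Set E} (hK : Convex ℝ K)
    (hKne : K.Nonempty) (hKb : Bornology.IsBounded K) (hLne : L.Nonempty)
    (hLb : Bornology.IsBounded L) :
    closure (convexHull ℝ (K ∪ L)) ⊆ cthickening (hausdorffDist K L) K := by
  rw [← closedConvexHull_eq_closure_convexHull]
  refine closedConvexHull_min (Set.union_subset (self_subset_cthickening K) fun y hy => ?_)
    (hK.cthickening _) isClosed_cthickening
  rw [mem_cthickening_iff, hausdorffDist, ENNReal.ofReal_toReal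
    (hausdorffEDist_ne_top_of_nonempty_of_bounded hKne hLne hKb hLb), hausdorffEDist_comm]
  exact infEDist_le_hausdorffEDist_of_mem hy

theorem Convex.add_closedBall_subset_smul {A : Set E} (hA : Convex ℝ A) {r d : ℝ} (hr : 0 < r)
    (hd : 0 ≤ d) (hball : closedBall 0 r ⊆ A) : A + closedBall 0 d ⊆ (1 + d / r) • A := by
  have hdr : 0 ≤ d / r := div_nonneg hd hr.le
  have : closedBall (0 : E) d = (d / r) • closedBall 0 r := by
    rw [smul_closedBall _ _ hr.le, smul_zero, Real.norm_of_nonneg hdr,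
      div_mul_cancel₀ _ hr.ne']
  rw [hA.add_smul zero_le_one hdr, one_smul, this]
  exact Set.add_subset_add_left (Set.smul_set_mono hball)

theorem closure_convexHull_union_subset {G K L : Set E} (hGcv : Convex ℝ G) (hG : IsClosed G)
    (hKG : K ⊆ G) (hLG : L ⊆ G) : closure (convexHull ℝ (K ∪ L)) ⊆ G := by
  rw [← closedConvexHull_eq_closure_convexHull]
  exact closedConvexHull_min (Set.union_subset hKG hLG) hGcv hG

variable [MeasurableSpace E]

noncomputable def hullExcess (μ : Measure E) (G K L : Set E) : ℝ :=
  (μ (G + closure (convexHull ℝ (K ∪ L)))).toReal - (μ (G + K)).toReal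

theorem measure_add_closure_convexHull_lt_top {μ : Measure E} [IsFiniteMeasureOnCompacts μ]
    {G K L : Set E} (hGcv : Convex ℝ G) (hG : IsCompact G) (hKG : K ⊆ G) (hLG : L ⊆ G) :
    μ (G + closure (convexHull ℝ (K ∪ L))) < ⊤ :=
  (hG.add hG).measure_lt_top.trans_le' <| measure_mono <|
    Set.add_subset_add_left (closure_convexHull_union_subset hGcv hG.isClosed hKG hLG)

theorem hullExcess_nonneg {μ : Measure E} [IsFiniteMeasureOnCompacts μ] {G K L : Set E}
    (hGcv : Convex ℝ G) (hG : IsCompact G) (hKG : K ⊆ G) (hLG : L ⊆ G) :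
    0 ≤ hullExcess μ G K L := by
  rw [hullExcess, sub_nonneg]
  refine ENNReal.toReal_mono (measure_add_closure_convexHull_lt_top hGcv hG hKG hLG).ne
    (measure_mono (Set.add_subset_add_left ?_))
  exact (Set.subset_union_left.trans (subset_convexHull ℝ _)).trans subset_closure

variable [BorelSpace E] [FiniteDimensional ℝ E] (μ : Measure E) [μ.IsAddHaarMeasure]

theorem Convex.addHaar_add_closedBall_le {A : Set E} (hA : Convex ℝ A) {c : E} {r d : ℝ}
    (hr : 0 < r) (hd : 0 ≤ d) (hball : closedBall c r ⊆ A) :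
    μ (A + closedBall 0 d) ≤ ENNReal.ofReal ((1 + d / r) ^ finrank ℝ E) * μ A := by
  have hball' : closedBall 0 r ⊆ -c +ᵥ A := by
    simpa [vadd_closedBall] using Set.vadd_set_mono (a := -c) hball
  calc μ (A + closedBall 0 d) = μ ((-c +ᵥ A) + closedBall 0 d) := by
        rw [vadd_add_assoc, measure_vadd]
    _ ≤ μ ((1 + d / r) • (-c +ᵥ A)) :=
        measure_mono ((hA.vadd (-c)).add_closedBall_subset_smul hr hd hball')
    _ = _ := by rw [Measure.addHaar_smul_of_nonneg μ (by positivity), measure_vadd]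

theorem hullExcess_le {G K L : Set E} (hGcv : Convex ℝ G) (hG : IsCompact G) {z : E} {r : ℝ}
    (hr : 0 < r) (hball : closedBall z r ⊆ G) (hKcv : Convex ℝ K) (hK : IsCompact K)
    (hKne : K.Nonempty) (hKG : K ⊆ G) (hLne : L.Nonempty) (hLG : L ⊆ G) :
    hullExcess μ G K L ≤ finrank ℝ E * (1 + diam G / r) ^ (finrank ℝ E - 1) / r *
      (μ (G + G)).toReal * hausdorffDist K L := by
  set d := hausdorffDist K L
  have hd : 0 ≤ d := hausdorffDist_nonneg
  have hdG : d ≤ diam G := hausdorffDist_le_diam_of_subset hG.isBounded hKne hLne hKG hLG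
  obtain ⟨k, hk⟩ := hKne
  have hball' : closedBall (z + k) r ⊆ G + K := by
    rw [← closedBall_add_singleton]
    exact Set.add_subset_add hball (Set.singleton_subset_iff.2 hk)
  have hsub : G + closure (convexHull ℝ (K ∪ L)) ⊆ (G + K) + closedBall 0 d := by
    rw [add_assoc, hK.add_closedBall_zero hd]
    exact Set.add_subset_add_left <| closure_convexHull_union_subset_cthickening hKcv ⟨k, hk⟩
      hK.isBounded hLne (hG.isBounded.subset hLG)
  have hGK : μ (G + K) ≤ μ (G + G) := measure_mono (Set.add_subset_add_left hKG)
  have hfin : μ (G + G) ≠ ⊤ := (hG.add hG).measure_lt_top.ne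
  have hvol : (μ (G + closure (convexHull ℝ (K ∪ L)))).toReal
      ≤ (1 + d / r) ^ finrank ℝ E * (μ (G + K)).toReal := by
    have := (measure_mono hsub).trans ((hGcv.add hKcv).addHaar_add_closedBall_le μ hr hd hball')
    rw [← ENNReal.toReal_ofReal (by positivity : (0 : ℝ) ≤ (1 + d / r) ^ finrank ℝ E),
      ← ENNReal.toReal_mul]
    exact ENNReal.toReal_mono
      (ENNReal.mul_ne_top ENNReal.ofReal_ne_top (ne_top_of_le_ne_top hfin hGK)) this
  have hpow := one_add_pow_sub_one_le (div_nonneg hd hr.le)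
    (div_le_div_of_nonneg_right hdG hr.le) (finrank ℝ E)
  calc hullExcess μ G K L ≤ ((1 + d / r) ^ finrank ℝ E - 1) * (μ (G + K)).toReal := by
        rw [hullExcess]; linarith
    _ ≤ finrank ℝ E * (1 + diam G / r) ^ (finrank ℝ E - 1) * (d / r) * (μ (G + G)).toReal :=
        mul_le_mul hpow (ENNReal.toReal_mono hfin hGK) ENNReal.toReal_nonneg (by positivity)
    _ = _ := by ring

end NormedSpace

section InnerProductSpace

variable {E : Type*} [NormedAddCommGroup E] [InnerProductSpace ℝ E]

theorem exists_norm_eq_one_inner_add_infDist_le {K : Set E} (hK : IsCompact K)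
    (hKcv : Convex ℝ K) (hKne : K.Nonempty) {x : E} (hx : 0 < infDist x K) :
    ∃ u : E, ‖u‖ = 1 ∧ ∀ k ∈ K, ⟪u, k⟫_ℝ + infDist x K ≤ ⟪u, x⟫_ℝ := by
  obtain ⟨y, hy, hxy⟩ := hK.exists_infDist_eq_dist hKne x
  set D := infDist x K with hD
  have hnorm : ‖x - y‖ = D := by rw [hxy, dist_eq_norm]
  have hobtuse : ∀ k ∈ K, ⟪x - y, k - y⟫_ℝ ≤ 0 := by
    refine (norm_eq_iInf_iff_real_inner_le_zero hKcv hy).1 ?_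
    rw [hnorm, hD, infDist_eq_iInf]
    simp only [dist_eq_norm]
  refine ⟨D⁻¹ • (x - y), ?_, fun k hk => ?_⟩
  · rw [norm_smul, hnorm, Real.norm_of_nonneg (inv_nonneg.2 hx.le), inv_mul_cancel₀ hx.ne']
  · have h : ⟪x - y, k⟫_ℝ + D ^ 2 ≤ ⟪x - y, x⟫_ℝ := by
      have := hobtuse k hk
      rw [← hnorm, ← real_inner_self_eq_norm_sq]
      simp only [inner_sub_right] at this ⊢
      linarith
    rw [real_inner_smul_left, real_inner_smul_left]
    calc D⁻¹ * ⟪x - y, k⟫_ℝ + D = D⁻¹ * (⟪x - y, k⟫_ℝ + D ^ 2) := by field_simp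
      _ ≤ D⁻¹ * ⟪x - y, x⟫_ℝ := mul_le_mul_of_nonneg_left h (inv_nonneg.2 hx.le)

theorem exists_disjoint_vadd_image_homothety_add {G K : Set E} (hG : IsCompact G)
    (hGne : G.Nonempty) (hK : IsCompact K) (hKcv : Convex ℝ K) (hKne : K.Nonempty) {x : E}
    {t : ℝ} (ht : 0 ≤ t) (htx : t * diam G < infDist x K) :
    ∃ p ∈ G, Disjoint (x +ᵥ AffineMap.homothety p t '' G) (G + K) := by
  obtain ⟨u, hu, hsep⟩ := exists_norm_eq_one_inner_add_infDist_le hK hKcv hKne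
    ((mul_nonneg ht diam_nonneg).trans_lt htx)
  obtain ⟨p, hp, hpmax⟩ := hG.exists_isMaxOn hGne (f := fun g => ⟪u, g⟫_ℝ)
    (continuous_const.inner continuous_id).continuousOn
  refine ⟨p, hp, Set.disjoint_left.2 ?_⟩
  rintro _ ⟨_, ⟨v, hv, rfl⟩, rfl⟩ ⟨g, hg, k, hk, hgk⟩
  have hshift : -(t * diam G) ≤ ⟪u, t • (v - p)⟫_ℝ := by
    refine neg_le_of_abs_le ((abs_real_inner_le_norm _ _).trans ?_)
    rw [hu, one_mul, norm_smul, Real.norm_of_nonneg ht, ← dist_eq_norm]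
    exact mul_le_mul_of_nonneg_left (dist_le_diam_of_mem hG.isBounded hv hp) ht
  have hinner := congrArg (fun y => ⟪u, y⟫_ℝ) hgk
  simp only [AffineMap.homothety_apply, vsub_eq_sub, vadd_eq_add, inner_add_right] at hinner
  have hgp : ⟪u, g⟫_ℝ ≤ ⟪u, p⟫_ℝ := hpmax hg
  linarith [hsep k hk]

variable [MeasurableSpace E] [BorelSpace E] [FiniteDimensional ℝ E] (μ : Measure E)
  [μ.IsAddHaarMeasure]

theorem Convex.addHaar_add_add_le_of_lt_infDist {G K M : Set E} (hGcv : Convex ℝ G)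
    (hG : IsCompact G) (hGne : G.Nonempty) (hK : IsCompact K) (hKcv : Convex ℝ K)
    (hKne : K.Nonempty) (hKM : K ⊆ M) {x : E} (hx : x ∈ M) {t : ℝ} (ht₀ : 0 ≤ t)
    (ht₁ : t ≤ 1) (htx : t * diam G < infDist x K) :
    μ (G + K) + ENNReal.ofReal (t ^ finrank ℝ E) * μ G ≤ μ (G + M) := by
  obtain ⟨p, hp, hdisj⟩ :=
    exists_disjoint_vadd_image_homothety_add hG hGne hK hKcv hKne ht₀ htx
  have hsub : AffineMap.homothety p t '' G ⊆ G := by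
    rintro _ ⟨v, hv, rfl⟩
    rw [AffineMap.homothety_eq_lineMap]
    exact hGcv.lineMap_mem hp hv ⟨ht₀, ht₁⟩
  calc μ (G + K) + ENNReal.ofReal (t ^ finrank ℝ E) * μ G
      = μ ((x +ᵥ AffineMap.homothety p t '' G) ∪ (G + K)) := by
        rw [measure_union hdisj (hG.add hK).isClosed.measurableSet, measure_vadd,
          Measure.addHaar_image_homothety, abs_of_nonneg (by positivity), add_comm]
    _ ≤ μ (G + M) := by
        refine measure_mono (Set.union_subset ?_ (Set.add_subset_add_left hKM))
        rw [add_comm]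
        exact (Set.vadd_set_subset_add hx).trans (Set.add_subset_add_left hsub)


theorem hausdorffDist_pow_mul_le_hullExcess (hN : finrank ℝ E ≠ 0) {G K L : Set E}
    (hGcv : Convex ℝ G) (hG : IsCompact G) (hKcv : Convex ℝ K) (hK : IsCompact K)
    (hKne : K.Nonempty) (hKG : K ⊆ G) (hLG : L ⊆ G) {x : E} (hx : x ∈ L)
    (hxd : hausdorffDist K L ≤ infDist x K) :
    hausdorffDist K L ^ finrank ℝ E * (μ G).toReal ≤
      (2 * diam G) ^ finrank ℝ E * hullExcess μ G K L := by
  set d := hausdorffDist K L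
  set N := finrank ℝ E
  have hd₀ : 0 ≤ d := hausdorffDist_nonneg
  rcases hd₀.eq_or_lt with hd | hd
  · rw [← hd, zero_pow hN, zero_mul]
    exact mul_nonneg (by positivity) (hullExcess_nonneg hGcv hG hKG hLG)
  have hdG : d ≤ diam G := hausdorffDist_le_diam_of_subset hG.isBounded hKne ⟨x, hx⟩ hKG hLG
  have hGpos : 0 < diam G := hd.trans_le hdG
  set t := d / (2 * diam G)
  have ht₀ : 0 ≤ t := by positivity
  have ht₁ : t ≤ 1 := by rw [div_le_one (by positivity)]; linarith
  have htx : t * diam G < infDist x K := by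
    rw [div_mul_eq_mul_div, mul_div_mul_right _ _ hGpos.ne']
    linarith
  set M := closure (convexHull ℝ (K ∪ L))
  have hKM : K ⊆ M :=
    (Set.subset_union_left.trans (subset_convexHull ℝ _)).trans subset_closure
  have hxM : x ∈ M := subset_closure (subset_convexHull ℝ _ (Set.mem_union_right K hx))
  have hvol := ENNReal.toReal_mono (measure_add_closure_convexHull_lt_top hGcv hG hKG hLG).ne
    (hGcv.addHaar_add_add_le_of_lt_infDist μ hG (hKne.mono hKG) hK hKcv hKne hKM hxM ht₀ ht₁
      htx)
  rw [ENNReal.toReal_add (hG.add hK).measure_lt_top.ne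
    (ENNReal.mul_ne_top ENNReal.ofReal_ne_top hG.measure_lt_top.ne), ENNReal.toReal_mul,
    ENNReal.toReal_ofReal (by positivity)] at hvol
  calc d ^ N * (μ G).toReal = (2 * diam G) ^ N * (t ^ N * (μ G).toReal) := by
        rw [← mul_assoc, ← mul_pow, mul_div_cancel₀ _ (by positivity)]
    _ ≤ (2 * diam G) ^ N * hullExcess μ G K L := by
        gcongr
        rw [hullExcess]
        linarith

end InnerProductSpace

section rhoDist

variable {n : ℕ}

theorem rhoDist_eq_hullExcess_add (G K L : Set (EuclideanSpace ℝ (Fin n))) :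
    rhoDist G K L = hullExcess volume G K L + hullExcess volume G L K := by
  rw [rhoDist, hullExcess, hullExcess, Set.union_comm L K]
  ring

theorem rhoDist_nonneg {G K L : Set (EuclideanSpace ℝ (Fin n))} (hGcv : Convex ℝ G)
    (hG : IsCompact G) (hKG : K ⊆ G) (hLG : L ⊆ G) : 0 ≤ rhoDist G K L := by
  rw [rhoDist_eq_hullExcess_add]
  exact add_nonneg (hullExcess_nonneg hGcv hG hKG hLG) (hullExcess_nonneg hGcv hG hLG hKG)

theorem rhoDist_le {G K L : Set (EuclideanSpace ℝ (Fin n))} (hGcv : Convex ℝ G)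
    (hG : IsCompact G) {z : EuclideanSpace ℝ (Fin n)} {r : ℝ} (hr : 0 < r)
    (hball : closedBall z r ⊆ G) (hKcv : Convex ℝ K) (hK : IsCompact K) (hKne : K.Nonempty)
    (hKG : K ⊆ G) (hLcv : Convex ℝ L) (hL : IsCompact L) (hLne : L.Nonempty) (hLG : L ⊆ G) :
    rhoDist G K L ≤
      2 * (n * (1 + diam G / r) ^ (n - 1) / r * (volume (G + G)).toReal) * hausdorffDist K L := by
  have hKL := hullExcess_le volume hGcv hG hr hball hKcv hK hKne hKG hLne hLG
  have hLK := hullExcess_le volume hGcv hG hr hball hLcv hL hLne hLG hKne hKG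
  rw [finrank_euclideanSpace_fin] at hKL hLK
  rw [rhoDist_eq_hullExcess_add, two_mul, add_mul]
  rw [hausdorffDist_comm] at hLK
  exact add_le_add hKL hLK

theorem hausdorffDist_pow_mul_le_rhoDist (hn : n ≠ 0) {G K L : Set (EuclideanSpace ℝ (Fin n))}
    (hGcv : Convex ℝ G) (hG : IsCompact G) (hKcv : Convex ℝ K) (hK : IsCompact K)
    (hKne : K.Nonempty) (hKG : K ⊆ G) (hLcv : Convex ℝ L) (hL : IsCompact L)
    (hLne : L.Nonempty) (hLG : L ⊆ G) :
    hausdorffDist K L ^ n * (volume G).toReal ≤ (2 * diam G) ^ n * rhoDist G K L := by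
  have hN : finrank ℝ (EuclideanSpace ℝ (Fin n)) ≠ 0 := by rwa [finrank_euclideanSpace_fin]
  have hKL := hullExcess_nonneg (μ := volume) hGcv hG hKG hLG
  have hLK := hullExcess_nonneg (μ := volume) hGcv hG hLG hKG
  have hD : 0 ≤ (2 * diam G) ^ n := by positivity
  rw [rhoDist_eq_hullExcess_add, mul_add]
  obtain ⟨x, hx, hxd⟩ | ⟨x, hx, hxd⟩ := exists_mem_hausdorffDist_le_infDist hK hKne hL hLne
  · rw [hausdorffDist_comm] at hxd ⊢
    have h := hausdorffDist_pow_mul_le_hullExcess volume hN hGcv hG hLcv hL hLne hLG hKG hx hxd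
    rw [finrank_euclideanSpace_fin] at h
    linarith [mul_nonneg hD hKL]
  · have h := hausdorffDist_pow_mul_le_hullExcess volume hN hGcv hG hKcv hK hKne hKG hLG hx hxd
    rw [finrank_euclideanSpace_fin] at h
    linarith [mul_nonneg hD hLK]

end rhoDist

theorem stmt0 {n : ℕ} (hn : 1 ≤ n) (G : Set (EuclideanSpace ℝ (Fin n)))
    (hGcv : Convex ℝ G) (hGcp : IsCompact G) (hGint : (interior G).Nonempty) :
    ∃ C : ℝ, 1 < C ∧ ∀ K L : Set (EuclideanSpace ℝ (Fin n)),
      K.Nonempty → IsCompact K → Convex ℝ K → K ⊆ G →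
      L.Nonempty → IsCompact L → Convex ℝ L → L ⊆ G →
      (1 / C) * hausdorffDist K L ^ n ≤ rhoDist G K L ∧
        rhoDist G K L ≤ C * hausdorffDist K L := by
  obtain ⟨z, hz⟩ := hGint
  obtain ⟨r, hr, hball⟩ := nhds_basis_closedBall.mem_iff.1 (mem_interior_iff_mem_nhds.1 hz)
  have hvolG : 0 < (volume G).toReal :=
    ENNReal.toReal_pos (Measure.measure_pos_of_nonempty_interior _ ⟨z, hz⟩).ne'
      hGcp.measure_lt_top.ne
  set C₁ := (2 * diam G) ^ n / (volume G).toReal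
  set C₂ := 2 * (n * (1 + diam G / r) ^ (n - 1) / r * (volume (G + G)).toReal)
  set C := max (max C₁ C₂) 2
  have hC : 0 < C := two_pos.trans_le (le_max_right _ _)
  refine ⟨C, one_lt_two.trans_le (le_max_right _ _),
    fun K L hKne hK hKcv hKG hLne hL hLcv hLG => ⟨?_, ?_⟩⟩
  · have hρ := rhoDist_nonneg hGcv hGcp hKG hLG
    have hlow := hausdorffDist_pow_mul_le_rhoDist (by omega) hGcv hGcp hKcv hK hKne hKG hLcv hL
      hLne hLG
    rw [one_div_mul_eq_div, div_le_iff₀' hC]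
    calc hausdorffDist K L ^ n ≤ C₁ * rhoDist G K L := by
          rwa [div_mul_eq_mul_div, le_div_iff₀ hvolG]
      _ ≤ C * rhoDist G K L :=
          mul_le_mul_of_nonneg_right ((le_max_left _ _).trans (le_max_left _ _)) hρ
  · calc rhoDist G K L ≤ C₂ * hausdorffDist K L :=
          rhoDist_le hGcv hGcp hr hball hKcv hK hKne hKG hLcv hL hLne hLG
      _ ≤ C * hausdorffDist K L :=
          mul_le_mul_of_nonneg_right ((le_max_right _ _).trans (le_max_left _ _))
            hausdorffDist_nonneg
end

section
/- Let G ⊂ ℝⁿ (n ≥ 1) be a convex body and let β > 1. Then for every C > 0 there exist nonempty compact convex subsets K, L of G with ρ_G(K,L) > C·d_H(K,L)^β; that is, no inequality of the form ρ_G(K,L) ≤ C·d_H(K,L)^β holds for all K, L. -/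
open MeasureTheory Metric Pointwise

lemma pow_gap {n : ℕ} (hn : 1 ≤ n) {t : ℝ} (ht0 : 0 ≤ t) (ht1 : t ≤ 1) :
    t ≤ 2 ^ n - (2 - t) ^ n := by
  induction n with
  | zero => omega
  | succ m ih =>
    rcases Nat.eq_zero_or_pos m with hm | hm
    · subst hm; simp
    · have h1 : t ≤ 2 ^ m - (2 - t) ^ m := ih hm
      have h2t : (0:ℝ) ≤ 2 - t := by linarith
      have h2 : (0:ℝ) ≤ (2 - t) ^ m := pow_nonneg h2t m
      have h3 : (2:ℝ) - t ≤ 2 := by linarith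
      rw [pow_succ, pow_succ]
      nlinarith [h2, h1, ht0, ht1]

theorem stmt5 {n : ℕ} (hn : 1 ≤ n) (G : Set (EuclideanSpace ℝ (Fin n)))
    (hGcv : Convex ℝ G) (hGcp : IsCompact G) (hGint : (interior G).Nonempty)
    (β : ℝ) (hβ : 1 < β) :
    ∀ C : ℝ, 0 < C → ∃ K L : Set (EuclideanSpace ℝ (Fin n)),
      K.Nonempty ∧ IsCompact K ∧ Convex ℝ K ∧ K ⊆ G ∧
      L.Nonempty ∧ IsCompact L ∧ Convex ℝ L ∧ L ⊆ G ∧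
      C * hausdorffDist K L ^ β < rhoDist G K L := by
  intro C hC
  obtain ⟨x, hx⟩ := hGint
  have hxG : x ∈ G := interior_subset hx
  -- constants
  set V : ℝ := (volume G).toReal with hVdef
  have hVpos : 0 < V :=
    ENNReal.toReal_pos (Measure.measure_pos_of_nonempty_interior _ ⟨x, hx⟩).ne'
      hGcp.measure_lt_top.ne
  set R : ℝ := diam G + 1 with hRdef
  have hR : 0 < R := by
    have := diam_nonneg (s := G); positivity
  have hβ0 : 0 < β - 1 := by linarith
  set A : ℝ := V / (C * R ^ β) with hAdef
  have hRβ : 0 < R ^ β := Real.rpow_pos_of_pos hR β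
  have hCRβ : 0 < C * R ^ β := mul_pos hC hRβ
  have hA : 0 < A := div_pos hVpos hCRβ
  set τ : ℝ := (A / 2) ^ (1 / (β - 1)) with hτdef
  have hτ : 0 < τ := Real.rpow_pos_of_pos (by linarith) _
  set t : ℝ := min 1 τ with htdef
  have ht0 : 0 < t := lt_min one_pos hτ
  have ht1 : t ≤ 1 := min_le_left _ _
  have h1t : 0 ≤ 1 - t := by linarith
  have htβ : t ^ (β - 1) < A := by
    calc t ^ (β - 1) ≤ τ ^ (β - 1) :=
          Real.rpow_le_rpow ht0.le (min_le_right _ _) hβ0.le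
      _ = A / 2 := by
          rw [hτdef, ← Real.rpow_mul (by linarith : (0:ℝ) ≤ A / 2),
            one_div, inv_mul_cancel₀ hβ0.ne', Real.rpow_one]
      _ < A := by linarith
  -- the sets
  set L : Set (EuclideanSpace ℝ (Fin n)) := (1 - t) • G + {t • x} with hLdef
  have hLsub : L ⊆ G := by
    intro y hy
    rw [hLdef, Set.mem_add] at hy
    obtain ⟨u, hu, v, hv, rfl⟩ := hy
    obtain ⟨g, hg, rfl⟩ := hu
    rcases hv with rfl
    exact hGcv hg hxG h1t ht0.le (by ring)
  have hLne : L.Nonempty :=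
    ⟨(1 - t) • x + t • x, Set.add_mem_add (Set.smul_mem_smul_set hxG) rfl⟩
  have hLcp : IsCompact L := by
    have h1 : IsCompact ((1 - t) • G) := by
      rw [← Set.image_smul]; exact hGcp.image (continuous_const_smul _)
    exact h1.add isCompact_singleton
  have hLcv : Convex ℝ L := (hGcv.smul _).add (convex_singleton _)
  -- volume computations
  have hUL : closure (convexHull ℝ (G ∪ L)) = G := by
    rw [Set.union_eq_self_of_subset_right hLsub, hGcv.convexHull_eq,
      hGcp.isClosed.closure_eq]
  have hGG : G + G = (2 : ℝ) • G := by
    calc G + G = (1:ℝ) • G + (1:ℝ) • G := by rw [one_smul]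
      _ = ((1:ℝ) + 1) • G := (hGcv.add_smul zero_le_one zero_le_one).symm
      _ = (2:ℝ) • G := by norm_num
  have hGGvol : volume (G + G) = ENNReal.ofReal ((2:ℝ) ^ n) * volume G := by
    rw [hGG, Measure.addHaar_smul_of_nonneg _ (by norm_num : (0:ℝ) ≤ 2),
      finrank_euclideanSpace_fin]
  have hGLset : G + L = ((2 - t) • G) + {t • x} := by
    rw [hLdef, ← add_assoc]
    congr 1
    calc G + (1 - t) • G = (1:ℝ) • G + (1 - t) • G := by rw [one_smul]
      _ = ((1:ℝ) + (1 - t)) • G := (hGcv.add_smul zero_le_one h1t).symm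
      _ = (2 - t) • G := by rw [show (1:ℝ) + (1 - t) = 2 - t by ring]
  have hGLvol : volume (G + L) = ENNReal.ofReal ((2 - t) ^ n) * volume G := by
    rw [hGLset, add_comm, Set.singleton_add]
    have himg : volume ((fun y => t • x + y) '' ((2 - t) • G))
        = volume ((2 - t) • G) := by
      simpa using measure_vadd (t • x) volume ((2 - t) • G)
    rw [himg, Measure.addHaar_smul_of_nonneg _ (by linarith : (0:ℝ) ≤ 2 - t),
      finrank_euclideanSpace_fin]
  have hGfin : volume G ≠ ⊤ := hGcp.measure_lt_top.ne
  have key : rhoDist G G L = ((2:ℝ) ^ n - (2 - t) ^ n) * V := by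
    unfold rhoDist
    rw [hUL, hGGvol, hGLvol, ENNReal.toReal_mul, ENNReal.toReal_mul,
      ENNReal.toReal_ofReal (by positivity : (0:ℝ) ≤ (2:ℝ) ^ n),
      ENNReal.toReal_ofReal (pow_nonneg (by linarith) n)]
    rw [← hVdef]; ring
  -- Hausdorff distance bound
  have hdist : ∀ g ∈ G, dist g ((1 - t) • g + t • x) ≤ t * R := by
    intro g hg
    have heq : g - ((1 - t) • g + t • x) = t • (g - x) := by module
    rw [dist_eq_norm, heq, norm_smul, Real.norm_eq_abs, abs_of_nonneg ht0.le]
    have : ‖g - x‖ ≤ R := by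
      rw [← dist_eq_norm]
      have := dist_le_diam_of_mem hGcp.isBounded hg hxG
      rw [hRdef]; linarith
    exact mul_le_mul_of_nonneg_left this ht0.le
  have hdH : hausdorffDist G L ≤ t * R := by
    apply hausdorffDist_le_of_mem_dist (by positivity)
    · intro g hg
      exact ⟨(1 - t) • g + t • x,
        Set.add_mem_add (Set.smul_mem_smul_set hg) rfl, hdist g hg⟩
    · intro y hy
      rw [hLdef, Set.mem_add] at hy
      obtain ⟨u, hu, v, hv, rfl⟩ := hy
      obtain ⟨g, hg, rfl⟩ := hu
      rcases hv with rfl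
      exact ⟨g, hg, by rw [dist_comm]; exact hdist g hg⟩
  refine ⟨G, L, ⟨x, hxG⟩, hGcp, hGcv, subset_rfl, hLne, hLcp, hLcv, hLsub, ?_⟩
  have htpow : t ^ β = t ^ (β - 1) * t := by
    rw [show β = β - 1 + 1 by ring, Real.rpow_add_one ht0.ne' (β - 1)]
    ring_nf
  calc C * hausdorffDist G L ^ β
      ≤ C * (t * R) ^ β := by
        apply mul_le_mul_of_nonneg_left _ hC.le
        exact Real.rpow_le_rpow hausdorffDist_nonneg hdH (by linarith)
    _ = C * R ^ β * t ^ (β - 1) * t := by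
        rw [Real.mul_rpow ht0.le hR.le, htpow]; ring
    _ < C * R ^ β * A * t := by
        apply mul_lt_mul_of_pos_right _ ht0
        exact mul_lt_mul_of_pos_left htβ hCRβ
    _ = t * V := by
        rw [hAdef]; field_simp
    _ ≤ ((2:ℝ) ^ n - (2 - t) ^ n) * V :=
        mul_le_mul_of_nonneg_right (pow_gap hn ht0.le ht1) hVpos.le
    _ = rhoDist G G L := key.symm
end

section
/- Let G ⊂ ℝⁿ (n ≥ 1) be a convex polytope with nonempty interior (the convex hull of a finite set of points) and let p < n be a positive real number. Then for every C > 0 there exist nonempty compact convex subsets K, L of G with C·d_H(K,L)^p > ρ_G(K,L); that is, no inequality of the form C·d_H(K,L)^p ≤ ρ_G(K,L) holds for all K, L. -/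
open MeasureTheory Metric Pointwise

/-!
Take `K = G` and cut a thin cap off `G` at a vertex `v` exposed by `u`:
`L = G ∩ {⟪u, ·⟫ ≤ ⟪u, v⟫ - ε}`. Then `d_H(G, L) ≥ ε`, while
`ρ_G(G, L) = Vol(G + G) - Vol(G + L) ≤ Vol((G + G) \ (G + L))`. As `G + G = 2 • G`, every point
of `(G + G) \ (G + L)` is `2 • y` with `y ∈ G \ L`, and since `G` is a polytope such `y` lie within
`O(ε)` of `v`. Hence `ρ_G(G, L) = O(εⁿ)`, which is below `C εᵖ` for small `ε` because `p < n`.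
-/

open Filter Topology
open scoped RealInnerProductSpace

theorem Convex.add_self_sdiff_add_subset {E : Type*} [AddCommGroup E] [Module ℝ E] {G L : Set E}
    (hG : Convex ℝ G) : (G + G) \ (G + L) ⊆ (2 : ℝ) • (G \ L) := by
  have hGG : G + G = (2 : ℝ) • G := by
    rw [← one_add_one_eq_two, hG.add_smul zero_le_one zero_le_one, one_smul]
  rintro _ ⟨hx, hxL⟩
  rw [hGG] at hx
  obtain ⟨y, hy, rfl⟩ := hx
  refine Set.smul_mem_smul_set ⟨hy, fun hyL => hxL ?_⟩
  simpa only [two_smul] using Set.add_mem_add hy hyL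

theorem exists_pos_le_mul_rpow_lt {p q : ℝ} (hpq : p < q) {C : ℝ} (hC : 0 < C) (M : ℝ) {η : ℝ}
    (hη : 0 < η) : ∃ ε, 0 < ε ∧ ε ≤ η ∧ M * ε ^ q < C * ε ^ p := by
  have hlim : Tendsto (fun ε : ℝ => M * ε ^ (q - p)) (𝓝[>] 0) (𝓝 0) := by
    have hcont : Continuous fun ε : ℝ => M * ε ^ (q - p) :=
      continuous_const.mul (Real.continuous_rpow_const (sub_pos.2 hpq).le)
    exact (hcont.tendsto' 0 0 (by simp [Real.zero_rpow (sub_pos.2 hpq).ne'])).mono_left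
      nhdsWithin_le_nhds
  obtain ⟨ε, hεC, hεη, hε⟩ := ((hlim.eventually_lt_const hC).and
    ((eventually_le_nhds hη).filter_mono nhdsWithin_le_nhds |>.and self_mem_nhdsWithin)).exists
  refine ⟨ε, hε, hεη, ?_⟩
  calc M * ε ^ q = M * ε ^ (q - p) * ε ^ p := by
        rw [mul_assoc, ← Real.rpow_add hε, sub_add_cancel]
    _ < C * ε ^ p := mul_lt_mul_of_pos_right hεC (Real.rpow_pos_of_pos hε p)

section InnerProductSpace

variable {E : Type*} [NormedAddCommGroup E] [InnerProductSpace ℝ E]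

theorem real_inner_lt_real_inner_self_of_norm_le {v w : E} (hw : ‖w‖ ≤ ‖v‖) (hwv : w ≠ v) :
    ⟪v, w⟫ < ⟪v, v⟫ := by
  have hsub : 0 < ‖w - v‖ := norm_pos_iff.2 (sub_ne_zero.2 hwv)
  have hexp := norm_sub_sq_real w v
  rw [real_inner_self_eq_norm_sq, real_inner_comm]
  nlinarith [mul_self_le_mul_self (norm_nonneg w) hw]

/-- A point of `s` of maximal norm is exposed by (a multiple of) itself. -/
theorem Finset.exists_mem_forall_ne_real_inner_le_sub (s : Finset E) (hs : s.Nonempty) :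
    ∃ v ∈ s, ∃ u : E, ‖u‖ ≤ 1 ∧ ∃ δ > 0, ∀ w ∈ s, w ≠ v → ⟪u, w⟫ ≤ ⟪u, v⟫ - δ := by
  obtain ⟨v, hv, hmax⟩ := s.exists_max_image (‖·‖) hs
  set u := (1 + ‖v‖)⁻¹ • v
  have hu : ‖u‖ ≤ 1 := by
    rw [norm_smul, norm_inv, Real.norm_of_nonneg (by positivity), inv_mul_le_iff₀ (by positivity)]
    linarith
  have hgap : ∀ w ∈ s, w ≠ v → 0 < ⟪u, v⟫ - ⟪u, w⟫ := fun w hw hwv => by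
    simp only [u, real_inner_smul_left, ← mul_sub]
    exact mul_pos (by positivity)
      (sub_pos.2 (real_inner_lt_real_inner_self_of_norm_le (hmax w hw) hwv))
  have hsmall : ∀ᶠ δ in 𝓝[>] (0 : ℝ), ∀ w ∈ s, w ≠ v → δ < ⟪u, v⟫ - ⟪u, w⟫ :=
    (eventually_all_finset s).2 fun w hw => by
      by_cases hwv : w = v
      · exact .of_forall fun _ h => absurd hwv h
      · exact ((eventually_lt_nhds (hgap w hw hwv)).filter_mono nhdsWithin_le_nhds).mono
          fun _ h _ => h
  obtain ⟨δ, hδw, hδ⟩ := (hsmall.and self_mem_nhdsWithin).exists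
  exact ⟨v, hv, u, hu, δ, hδ, fun w hw hwv => by linarith [hδw w hw hwv]⟩

theorem mul_dist_le_of_mem_convexHull {t : Finset E} {v u : E} (hv : v ∈ t) {δ D : ℝ}
    (hδ : 0 < δ) (hD : ∀ w ∈ t, dist w v ≤ D) (hsep : ∀ w ∈ t, w ≠ v → ⟪u, w⟫ ≤ ⟪u, v⟫ - δ)
    {x : E} (hx : x ∈ convexHull ℝ (t : Set E)) : δ * dist x v ≤ D * (⟪u, v⟫ - ⟪u, x⟫) := by
  have hD0 : 0 ≤ D := dist_self v ▸ hD v hv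
  have hconv : ConvexOn ℝ (convexHull ℝ (t : Set E)) fun y => δ * dist y v + D * ⟪u, y⟫ :=
    ((convexOn_dist v (convex_convexHull ℝ _)).smul hδ.le).add
      ((((innerSL ℝ u : E →L[ℝ] ℝ) : E →ₗ[ℝ] ℝ).convexOn (convex_convexHull ℝ _)).smul hD0)
  obtain ⟨w, hw, hxw⟩ := hconv.exists_ge_of_mem_convexHull (subset_convexHull ℝ _) hx
  by_cases hwv : w = v
  · subst hwv
    simp only [dist_self, mul_zero, zero_add] at hxw
    nlinarith [dist_nonneg (x := x) (y := w)]
  · nlinarith [hsep w hw hwv, hD w hw]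

theorem addHaar_real_add_self_sdiff_le [FiniteDimensional ℝ E] [MeasurableSpace E] [BorelSpace E]
    (μ : Measure E) [μ.IsAddHaarMeasure] {t : Finset E} {v u : E} (hv : v ∈ t) {δ ε : ℝ}
    (hδ : 0 < δ) (hsep : ∀ w ∈ t, w ≠ v → ⟪u, w⟫ ≤ ⟪u, v⟫ - δ) (hε : 0 ≤ ε) :
    μ.real ((convexHull ℝ ↑t + convexHull ℝ ↑t) \
        (convexHull ℝ ↑t + convexHull ℝ ↑t ∩ {y | ⟪u, y⟫ ≤ ⟪u, v⟫ - ε})) ≤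
      (2 * diam (t : Set E) / δ) ^ Module.finrank ℝ E * μ.real (ball 0 1) *
        ε ^ Module.finrank ℝ E := by
  set D := diam (t : Set E)
  have hD : ∀ w ∈ t, dist w v ≤ D := fun w hw => dist_le_diam_of_mem t.finite_toSet.isBounded hw hv
  have hcap : convexHull ℝ ↑t \ (convexHull ℝ ↑t ∩ {y | ⟪u, y⟫ ≤ ⟪u, v⟫ - ε}) ⊆
      closedBall v (D / δ * ε) := by
    rintro x ⟨hx, hxε⟩
    have hlt : ⟪u, v⟫ - ⟪u, x⟫ < ε := by
      by_contra! h
      exact hxε ⟨hx, show ⟪u, x⟫ ≤ ⟪u, v⟫ - ε by linarith⟩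
    rw [mem_closedBall, div_mul_eq_mul_div, le_div_iff₀ hδ, mul_comm]
    nlinarith [mul_dist_le_of_mem_convexHull hv hδ hD hsep hx, diam_nonneg (s := (t : Set E))]
  have hsub := (convex_convexHull ℝ _).add_self_sdiff_add_subset.trans (Set.smul_set_mono hcap)
  rw [_root_.smul_closedBall _ _ (by positivity), Real.norm_two] at hsub
  calc _ ≤ μ.real (closedBall (2 • v) (2 * (D / δ * ε))) :=
        measureReal_mono hsub measure_closedBall_lt_top.ne
    _ = _ := by rw [Measure.addHaar_real_closedBall μ _ (by positivity)]; ring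

theorem Convex.inter_setOf_real_inner_le {G : Set E} (hG : Convex ℝ G) (u : E) (c : ℝ) :
    Convex ℝ (G ∩ {y | ⟪u, y⟫ ≤ c}) :=
  hG.inter (convex_halfSpace_le (f := fun y => ⟪u, y⟫)
    ⟨inner_add_right u, fun a x => real_inner_smul_right u x a⟩ c)

theorem le_hausdorffDist_of_real_inner_le {K L : Set E} {u v : E} (hu : ‖u‖ ≤ 1) (hv : v ∈ K)
    (hL : L.Nonempty) (hK : Bornology.IsBounded K) (hLb : Bornology.IsBounded L) {ε : ℝ}
    (hε : ∀ y ∈ L, ⟪u, y⟫ ≤ ⟪u, v⟫ - ε) : ε ≤ hausdorffDist K L := by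
  refine le_trans ?_ (infDist_le_hausdorffDist_of_mem hv
    (hausdorffEDist_ne_top_of_nonempty_of_bounded ⟨v, hv⟩ hL hK hLb))
  refine (le_infDist hL).2 fun y hy => ?_
  calc ε ≤ ⟪u, v - y⟫ := by rw [inner_sub_right]; linarith [hε y hy]
    _ ≤ ‖u‖ * ‖v - y‖ := real_inner_le_norm u _
    _ ≤ dist v y := by rw [dist_eq_norm]; exact mul_le_of_le_one_left (norm_nonneg _) hu

theorem Finset.coe_nontrivial_of_interior_convexHull_nonempty [Nontrivial E] {s : Finset E}
    (hs : (interior (convexHull ℝ (s : Set E))).Nonempty) : (s : Set E).Nontrivial := by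
  by_contra h
  rcases (Set.not_nontrivial_iff.1 h).eq_empty_or_singleton with hs' | ⟨a, hs'⟩ <;>
    simp [hs', interior_singleton] at hs

end InnerProductSpace

theorem rhoDist_self_left_le {n : ℕ} {G L : Set (EuclideanSpace ℝ (Fin n))} (hG : Convex ℝ G)
    (hGc : IsCompact G) (hLG : L ⊆ G) : rhoDist G G L ≤ volume.real ((G + G) \ (G + L)) := by
  have hhull : closure (convexHull ℝ (G ∪ L)) = G := by
    rw [Set.union_eq_self_of_subset_right hLG, hG.convexHull_eq, hGc.isClosed.closure_eq]
  have hfin : volume (G + L) ≠ ⊤ := ne_top_of_le_ne_top (hGc.add hGc).measure_lt_top.ne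
    (measure_mono (Set.add_subset_add_left hLG))
  have hdiff := le_measureReal_sdiff (μ := volume) (s₁ := G + G) hfin
  rw [rhoDist, hhull]
  simp only [measureReal_def] at hdiff ⊢
  linarith

theorem stmt6_general {n : ℕ} (G : Set (EuclideanSpace ℝ (Fin n)))
    (hGpoly : ∃ s : Finset (EuclideanSpace ℝ (Fin n)), G = convexHull ℝ (s : Set _))
    (hGint : (interior G).Nonempty)
    (p : ℝ) (hp : 0 < p) (hpn : p < n) :
    ∀ C : ℝ, 0 < C → ∃ K L : Set (EuclideanSpace ℝ (Fin n)),
      K.Nonempty ∧ IsCompact K ∧ Convex ℝ K ∧ K ⊆ G ∧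
      L.Nonempty ∧ IsCompact L ∧ Convex ℝ L ∧ L ⊆ G ∧
      rhoDist G K L < C * hausdorffDist K L ^ p := by
  intro C hC
  obtain ⟨s, rfl⟩ := hGpoly
  have : Nontrivial (EuclideanSpace ℝ (Fin n)) := by
    have : 0 < n := by exact_mod_cast hp.trans hpn
    exact Module.nontrivial_of_finrank_pos (by rwa [finrank_euclideanSpace_fin])
  have hs := Finset.coe_nontrivial_of_interior_convexHull_nonempty hGint
  obtain ⟨v, hv, u, hu, δ, hδ, hsep⟩ :=
    s.exists_mem_forall_ne_real_inner_le_sub (Finset.coe_nonempty.1 hs.nonempty)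
  obtain ⟨w, hw, hwv⟩ := hs.exists_ne v
  set M := (2 * diam (s : Set (EuclideanSpace ℝ (Fin n))) / δ) ^ n *
    volume.real (ball (0 : EuclideanSpace ℝ (Fin n)) 1)
  obtain ⟨ε, hε, hεδ, hεC⟩ := exists_pos_le_mul_rpow_lt hpn hC M hδ
  set G := convexHull ℝ (s : Set (EuclideanSpace ℝ (Fin n)))
  set L := G ∩ {y | ⟪u, y⟫ ≤ ⟪u, v⟫ - ε}
  have hG : IsCompact G := s.finite_toSet.isCompact_convexHull (𝕜 := ℝ)
  have hL : IsCompact L := hG.inter_right (isClosed_le (by fun_prop) continuous_const)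
  have hwL : w ∈ L := ⟨subset_convexHull ℝ _ hw, (hsep w hw hwv).trans (by linarith)⟩
  refine ⟨G, L, ⟨v, subset_convexHull ℝ _ hv⟩, hG, convex_convexHull ℝ _, subset_rfl, ⟨w, hwL⟩,
    hL, (convex_convexHull ℝ _).inter_setOf_real_inner_le u _, Set.inter_subset_left, ?_⟩
  calc rhoDist G G L ≤ volume.real ((G + G) \ (G + L)) :=
        rhoDist_self_left_le (convex_convexHull ℝ _) hG Set.inter_subset_left
    _ ≤ M * ε ^ (n : ℝ) := by
        simpa only [finrank_euclideanSpace_fin, Real.rpow_natCast] using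
          addHaar_real_add_self_sdiff_le volume hv hδ hsep hε.le
    _ < C * ε ^ p := hεC
    _ ≤ C * hausdorffDist G L ^ p := by
        gcongr
        exact le_hausdorffDist_of_real_inner_le hu (subset_convexHull ℝ _ hv) ⟨w, hwL⟩
          hG.isBounded hL.isBounded fun y hy => hy.2

theorem stmt6 {n : ℕ} (hn : 1 ≤ n) (G : Set (EuclideanSpace ℝ (Fin n)))
    (hGpoly : ∃ s : Finset (EuclideanSpace ℝ (Fin n)), G = convexHull ℝ (s : Set _))
    (hGint : (interior G).Nonempty)
    (p : ℝ) (hp : 0 < p) (hpn : p < n) :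
    ∀ C : ℝ, 0 < C → ∃ K L : Set (EuclideanSpace ℝ (Fin n)),
      K.Nonempty ∧ IsCompact K ∧ Convex ℝ K ∧ K ⊆ G ∧
      L.Nonempty ∧ IsCompact L ∧ Convex ℝ L ∧ L ⊆ G ∧
      rhoDist G K L < C * hausdorffDist K L ^ p :=
  stmt6_general G hGpoly hGint p hp hpn
end

section
/- Let K, L ⊂ ℝⁿ be nonempty compact convex sets with K ≠ L. Then there exist p ∈ K and q ∈ L with |q − p| = d_H(K,L) such that either (i) the half-open segment (p,q] is contained in (K ∪̃ L) \ K and K ⊆ {x ∈ ℝⁿ : ⟨q − p, x − p⟩ ≤ 0}, or (ii) the half-open segment [p,q) is contained in (K ∪̃ L) \ L and L ⊆ {x ∈ ℝⁿ : ⟨p − q, x − q⟩ ≤ 0}. In particular, in case (i) the hyperplane through p orthogonal to [p,q] supports K, and in case (ii) the hyperplane through q orthogonal to [p,q] supports L. -/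
/-!
Since `K` and `L` are compact, the Hausdorff distance `d > 0` is attained as the distance from
a point of one set to the other set, say from `q ∈ L` to `K`. Let `p` be the point of `K`
nearest to `q`. The variational characterisation of the nearest point of a convex set says that
`K` lies in the half-space `⟪q - p, x - p⟫ ≤ 0`, and this half-space meets the ray from `p`
through `q` only at `p`; so `(p, q]` avoids `K` while lying in the convex hull of `K ∪ L`.
-/

open Metric Set
open scoped RealInnerProductSpace

section MetricSpace

variable {α : Type*} [MetricSpace α] {K L : Set α}

theorem IsCompact.exists_infDist_eq_hausdorffDist (hK : IsCompact K) (hKne : K.Nonempty)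
    (hL : IsCompact L) (hLne : L.Nonempty) :
    (∃ x ∈ K, infDist x L = hausdorffDist K L) ∨ ∃ y ∈ L, infDist y K = hausdorffDist K L := by
  have hfin : hausdorffEDist K L ≠ ⊤ :=
    hausdorffEDist_ne_top_of_nonempty_of_bounded hKne hLne hK.isBounded hL.isBounded
  obtain ⟨x, hxK, hxmax⟩ := hK.exists_isMaxOn hKne (continuous_infDist_pt L).continuousOn
  obtain ⟨y, hyL, hymax⟩ := hL.exists_isMaxOn hLne (continuous_infDist_pt K).continuousOn
  have hx : infDist x L ≤ hausdorffDist K L := infDist_le_hausdorffDist_of_mem hxK hfin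
  have hy : infDist y K ≤ hausdorffDist K L := by
    rw [hausdorffDist_comm]
    exact infDist_le_hausdorffDist_of_mem hyL (hausdorffEDist_comm (s := K) ▸ hfin)
  have hmax : hausdorffDist K L ≤ max (infDist x L) (infDist y K) :=
    hausdorffDist_le_of_infDist (le_max_of_le_left infDist_nonneg)
      (fun _ hz => le_max_of_le_left (hxmax hz)) (fun _ hz => le_max_of_le_right (hymax hz))
  rcases le_total (infDist x L) (infDist y K) with h | h
  · exact Or.inr ⟨y, hyL, le_antisymm hy (by simpa [h] using hmax)⟩
  · exact Or.inl ⟨x, hxK, le_antisymm hx (by simpa [h] using hmax)⟩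

theorem IsCompact.hausdorffDist_pos_of_ne (hK : IsCompact K) (hKne : K.Nonempty)
    (hL : IsCompact L) (hLne : L.Nonempty) (hKL : K ≠ L) : 0 < hausdorffDist K L := by
  have hfin : hausdorffEDist K L ≠ ⊤ :=
    hausdorffEDist_ne_top_of_nonempty_of_bounded hKne hLne hK.isBounded hL.isBounded
  exact hausdorffDist_nonneg.lt_of_ne' fun h =>
    hKL ((hK.isClosed.hausdorffDist_zero_iff_eq hL.isClosed hfin).1 h)

end MetricSpace

section InnerProductSpace

variable {E : Type*} [NormedAddCommGroup E] [InnerProductSpace ℝ E] {K L : Set E}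

theorem segment_diff_left_subset_compl_of_subset_halfspace {p q : E} (hpq : p ≠ q)
    (hK : K ⊆ {x | ⟪q - p, x - p⟫ ≤ 0}) : segment ℝ p q \ {p} ⊆ Kᶜ := by
  rw [segment_eq_image']
  rintro _ ⟨⟨t, ht, rfl⟩, hne⟩ hxK
  have ht0 : 0 < t := ht.1.lt_of_ne (by rintro rfl; simp at hne)
  have hinner : ⟪q - p, p + t • (q - p) - p⟫ = t * ‖q - p‖ ^ 2 := by
    rw [add_sub_cancel_left, real_inner_smul_right, real_inner_self_eq_norm_sq]
  have hle : t * ‖q - p‖ ^ 2 ≤ 0 := hinner ▸ hK hxK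
  have hqp : 0 < ‖q - p‖ := norm_pos_iff.2 (sub_ne_zero.2 hpq.symm)
  nlinarith [mul_pos ht0 (pow_pos hqp 2)]

theorem IsCompact.exists_infDist_eq_dist_and_subset_halfspace (hK : IsCompact K)
    (hKne : K.Nonempty) (hKcv : Convex ℝ K) (q : E) :
    ∃ p ∈ K, infDist q K = ‖q - p‖ ∧ K ⊆ {x | ⟪q - p, x - p⟫ ≤ 0} := by
  obtain ⟨p, hpK, hp⟩ := hK.exists_infDist_eq_dist hKne q
  rw [dist_eq_norm] at hp
  have hmin : ‖q - p‖ = ⨅ w : K, ‖q - w‖ := by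
    simp_rw [← hp, infDist_eq_iInf, dist_eq_norm]
  exact ⟨p, hpK, hp, (norm_eq_iInf_iff_real_inner_le_zero hKcv hpK).1 hmin⟩

theorem exists_segment_subset_closure_convexHull_diff_of_infDist_eq_hausdorffDist
    (hK : IsCompact K) (hKne : K.Nonempty) (hKcv : Convex ℝ K) {q : E} (hqL : q ∈ L)
    (hq : infDist q K = hausdorffDist K L) (hpos : 0 < hausdorffDist K L) :
    ∃ p ∈ K, ‖q - p‖ = hausdorffDist K L ∧
      segment ℝ p q \ {p} ⊆ closure (convexHull ℝ (K ∪ L)) \ K ∧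
      K ⊆ {x | ⟪q - p, x - p⟫ ≤ 0} := by
  obtain ⟨p, hpK, hp, hhalf⟩ := hK.exists_infDist_eq_dist_and_subset_halfspace hKne hKcv q
  have hpq : p ≠ q := by
    rintro rfl
    rw [infDist_zero_of_mem hpK] at hq
    exact hpos.ne hq
  refine ⟨p, hpK, hp ▸ hq, fun x hx => ⟨subset_closure ?_, ?_⟩, hhalf⟩
  · exact segment_subset_convexHull (mem_union_left _ hpK) (mem_union_right _ hqL) hx.1
  · exact segment_diff_left_subset_compl_of_subset_halfspace hpq hhalf hx

end InnerProductSpace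

theorem stmt8 {n : ℕ} (K L : Set (EuclideanSpace ℝ (Fin n)))
    (hKne : K.Nonempty) (hKcp : IsCompact K) (hKcv : Convex ℝ K)
    (hLne : L.Nonempty) (hLcp : IsCompact L) (hLcv : Convex ℝ L)
    (hKL : K ≠ L) :
    ∃ p ∈ K, ∃ q ∈ L, ‖q - p‖ = hausdorffDist K L ∧
      ((segment ℝ p q \ {p} ⊆ closure (convexHull ℝ (K ∪ L)) \ K ∧
          K ⊆ {x : EuclideanSpace ℝ (Fin n) | ⟪q - p, x - p⟫ ≤ 0}) ∨
        (segment ℝ p q \ {q} ⊆ closure (convexHull ℝ (K ∪ L)) \ L ∧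
          L ⊆ {x : EuclideanSpace ℝ (Fin n) | ⟪p - q, x - q⟫ ≤ 0})) := by
  have hpos := hKcp.hausdorffDist_pos_of_ne hKne hLcp hLne hKL
  rcases hKcp.exists_infDist_eq_hausdorffDist hKne hLcp hLne with ⟨p, hpK, hp⟩ | ⟨q, hqL, hq⟩
  · rw [hausdorffDist_comm] at hp hpos
    obtain ⟨q, hqL, hpq, hseg, hhalf⟩ :=
      exists_segment_subset_closure_convexHull_diff_of_infDist_eq_hausdorffDist
        hLcp hLne hLcv hpK hp hpos
    refine ⟨p, hpK, q, hqL, ?_, Or.inr ⟨?_, hhalf⟩⟩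
    · rw [norm_sub_rev, hpq, hausdorffDist_comm]
    · rwa [segment_symm, union_comm]
  · obtain ⟨p, hpK, hpq, hseg, hhalf⟩ :=
      exists_segment_subset_closure_convexHull_diff_of_infDist_eq_hausdorffDist
        hKcp hKne hKcv hqL hq hpos
    exact ⟨p, hpK, q, hqL, hpq, Or.inl ⟨hseg, hhalf⟩⟩
end

section
/- Let n ≥ 1, let u ∈ ℝⁿ be a unit vector, let r > 0, and let 0 < h ≤ r. Then the Lebesgue measure of the spherical cap {x ∈ ℝⁿ : |x| ≤ r, ⟨u, x⟩ ≥ r − h} is at least (ω_{n−1}/(n+1)) · (2r/π)ⁿ · (2h/r)^{(n+1)/2}, where ω_{n−1} is the Lebesgue measure of the closed unit ball in ℝⁿ⁻¹. -/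
/-!
Write `n = m + 1` and rotate `u` to the first coordinate vector. The cap then contains the
cylinder `[r - h, b] × closedBall 0 ρ` with `b = r - t`, where the depth `t = h m / (m + 2)`
maximizes `(h - t) t ^ (m / 2)`, and `ρ² = h r m (m + 4) / (m + 2)²`, which is at most
`r² - b²` because `h ≤ r`. With `s = √(2 h / r)` both the cylinder volume
`2 h / (m + 2) · ρ ^ m · ω_m` and the claimed bound are multiples of `r ^ (m + 1) s ^ (m + 2)`,
and comparing them is the numerical inequality
`(2 / π) ^ (m + 1) ≤ (√(m (m + 4) / 2) / (m + 2)) ^ m`.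
-/

open MeasureTheory Metric Real
open scoped RealInnerProductSpace

theorem exists_linearIsometryEquiv_apply_eq_inner {ι E : Type*} [Fintype ι]
    [NormedAddCommGroup E] [InnerProductSpace ℝ E] [FiniteDimensional ℝ E]
    (hcard : Module.finrank ℝ E = Fintype.card ι) {u : E} (hu : ‖u‖ = 1) (i : ι) :
    ∃ L : E ≃ₗᵢ[ℝ] EuclideanSpace ℝ ι, ∀ x, L x i = ⟪u, x⟫ := by
  have hortho : Orthonormal ℝ (({i} : Set ι).domRestrict fun _ ↦ u) :=
    ⟨fun _ ↦ hu, fun j k hjk ↦ absurd (Subsingleton.elim j k) hjk⟩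
  obtain ⟨B, hB⟩ := hortho.exists_orthonormalBasis_extension_of_card_eq hcard
  refine ⟨B.repr, fun x ↦ ?_⟩
  rw [B.repr_apply_apply, hB i rfl]

theorem EuclideanSpace.volume_setOf_inner_eq {ι : Type*} [Fintype ι] {u : EuclideanSpace ℝ ι}
    (hu : ‖u‖ = 1) (i : ι) (P : ℝ → ℝ → Prop) :
    volume {x : EuclideanSpace ℝ ι | P ‖x‖ ⟪u, x⟫} =
      volume {x : EuclideanSpace ℝ ι | P ‖x‖ (x i)} := by
  obtain ⟨L, hL⟩ := exists_linearIsometryEquiv_apply_eq_inner finrank_euclideanSpace hu i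
  have hpre : {x : EuclideanSpace ℝ ι | P ‖x‖ ⟪u, x⟫} =
      L.toMeasurableEquiv ⁻¹' {x | P ‖x‖ (x i)} := by
    ext x
    simp [hL]
  rw [hpre, L.measurePreserving.measure_preimage_equiv]

namespace EuclideanSpace

noncomputable def finSuccMeasurableEquiv (m : ℕ) :
    EuclideanSpace ℝ (Fin (m + 1)) ≃ᵐ ℝ × EuclideanSpace ℝ (Fin m) :=
  (MeasurableEquiv.toLp 2 _).symm.trans <|
    (MeasurableEquiv.piFinSuccAbove (fun _ ↦ ℝ) 0).trans <|
      MeasurableEquiv.prodCongr (MeasurableEquiv.refl ℝ) (MeasurableEquiv.toLp 2 _)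

theorem finSuccMeasurableEquiv_apply {m : ℕ} (x : EuclideanSpace ℝ (Fin (m + 1))) :
    finSuccMeasurableEquiv m x = (x 0, WithLp.toLp 2 fun i ↦ x i.succ) := rfl

theorem volume_preserving_finSuccMeasurableEquiv (m : ℕ) :
    MeasurePreserving (finSuccMeasurableEquiv m) :=
  (volume_preserving_symm_measurableEquiv_toLp _).trans <|
    (volume_preserving_piFinSuccAbove (fun _ ↦ ℝ) 0).trans <|
      (MeasurePreserving.id volume).prod (PiLp.volume_preserving_toLp _)

theorem norm_sq_eq_sq_add_norm_sq {m : ℕ} (x : EuclideanSpace ℝ (Fin (m + 1))) :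
    ‖x‖ ^ 2 = (finSuccMeasurableEquiv m x).1 ^ 2 + ‖(finSuccMeasurableEquiv m x).2‖ ^ 2 := by
  simp [finSuccMeasurableEquiv_apply, real_norm_sq_eq, Fin.sum_univ_succ]

end EuclideanSpace

open EuclideanSpace in
theorem ofReal_mul_volume_closedBall_le_volume_cap {m : ℕ} {u : EuclideanSpace ℝ (Fin (m + 1))}
    (hu : ‖u‖ = 1) {r a b ρ : ℝ} (hr : 0 ≤ r) (ha : 0 ≤ a) (hbρ : b ^ 2 + ρ ^ 2 ≤ r ^ 2) :
    ENNReal.ofReal (b - a) * volume (closedBall (0 : EuclideanSpace ℝ (Fin m)) ρ) ≤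
      volume {x : EuclideanSpace ℝ (Fin (m + 1)) | ‖x‖ ≤ r ∧ a ≤ ⟪u, x⟫} := by
  rw [volume_setOf_inner_eq hu 0 (fun t s ↦ t ≤ r ∧ a ≤ s), ← Real.volume_Icc,
    ← Measure.prod_prod, ← Measure.volume_eq_prod,
    ← (volume_preserving_finSuccMeasurableEquiv m).measure_preimage_equiv]
  refine measure_mono fun x ⟨⟨hax, hxb⟩, hx⟩ ↦ ⟨?_, hax⟩
  rw [← pow_le_pow_iff_left₀ (norm_nonneg x) hr two_ne_zero, norm_sq_eq_sq_add_norm_sq]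
  rw [mem_closedBall_zero_iff] at hx
  nlinarith [norm_nonneg (finSuccMeasurableEquiv m x).2]

theorem four_div_pi_sq_pow_succ_le (m : ℕ) :
    (4 / π ^ 2) ^ (m + 1) ≤ ((m * (m + 4)) / (2 * (m + 2) ^ 2) : ℝ) ^ m := by
  set p := 4 / π ^ 2
  have hp0 : 0 < p := by positivity
  have hp : p ≤ 0.41 := by
    rw [div_le_iff₀ (by positivity)]
    nlinarith [pi_gt_d2]
  match m with
  | 0 => norm_num; linarith
  | 1 => norm_num; nlinarith
  | 2 => norm_num; nlinarith [pow_le_pow_left₀ hp0.le hp 3]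
  | k + 3 =>
    have hq : p ≤ (((k + 3 : ℕ) * ((k + 3 : ℕ) + 4)) / (2 * ((k + 3 : ℕ) + 2) ^ 2) : ℝ) := by
      rw [le_div_iff₀ (by positivity)]
      push_cast
      nlinarith [(k.cast_nonneg : (0 : ℝ) ≤ k)]
    calc p ^ (k + 3 + 1) ≤ p ^ (k + 3) := pow_le_pow_of_le_one hp0.le (by linarith) (by omega)
      _ ≤ _ := pow_le_pow_left₀ hp0.le hq _

theorem two_div_pi_pow_succ_le (m : ℕ) :
    (2 / π) ^ (m + 1) ≤ (√(m * (m + 4) / 2) / (m + 2) : ℝ) ^ m := by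
  rw [← pow_le_pow_iff_left₀ (by positivity) (by positivity) two_ne_zero,
    pow_right_comm _ (m + 1), pow_right_comm _ m]
  calc ((2 / π) ^ 2) ^ (m + 1) = (4 / π ^ 2) ^ (m + 1) := by norm_num [div_pow]
    _ ≤ _ := four_div_pi_sq_pow_succ_le m
    _ = _ := by rw [div_pow (√_), sq_sqrt (by positivity), div_div]

theorem mul_pow_mul_volume_le_toReal_volume_cap {m : ℕ} {u : EuclideanSpace ℝ (Fin (m + 1))}
    (hu : ‖u‖ = 1) {r a b ρ : ℝ} (hr : 0 ≤ r) (ha : 0 ≤ a) (hab : a ≤ b) (hρ : 0 ≤ ρ)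
    (hbρ : b ^ 2 + ρ ^ 2 ≤ r ^ 2) :
    (b - a) * ρ ^ m * (volume (closedBall (0 : EuclideanSpace ℝ (Fin m)) 1)).toReal ≤
      (volume {x : EuclideanSpace ℝ (Fin (m + 1)) | ‖x‖ ≤ r ∧ a ≤ ⟪u, x⟫}).toReal := by
  have hfin : volume {x : EuclideanSpace ℝ (Fin (m + 1)) | ‖x‖ ≤ r ∧ a ≤ ⟪u, x⟫} ≠ ⊤ :=
    measure_ne_top_of_subset (fun x hx ↦ mem_closedBall_zero_iff.2 hx.1)
      measure_closedBall_lt_top.ne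
  have hcap := ENNReal.toReal_mono hfin (ofReal_mul_volume_closedBall_le_volume_cap hu hr ha hbρ)
  rwa [Measure.addHaar_closedBall' _ _ hρ, finrank_euclideanSpace_fin, ENNReal.toReal_mul,
    ENNReal.toReal_mul, ENNReal.toReal_ofReal (sub_nonneg.2 hab),
    ENNReal.toReal_ofReal (by positivity), ← mul_assoc] at hcap

theorem two_mul_div_mul_pow_mul_volume_le_toReal_volume_cap {m : ℕ}
    {u : EuclideanSpace ℝ (Fin (m + 1))} (hu : ‖u‖ = 1) {r h ρ : ℝ} (h0 : 0 ≤ h) (hhr : h ≤ r)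
    (hρ0 : 0 ≤ ρ) (hρ : ρ ^ 2 = h * r * m * (m + 4) / (m + 2) ^ 2) :
    2 * h / (m + 2) * ρ ^ m * (volume (closedBall (0 : EuclideanSpace ℝ (Fin m)) 1)).toReal ≤
      (volume {x : EuclideanSpace ℝ (Fin (m + 1)) | ‖x‖ ≤ r ∧ r - h ≤ ⟪u, x⟫}).toReal := by
  have hb : r - h ≤ r - h * m / (m + 2) := by
    gcongr r - ?_
    rw [div_le_iff₀ (by positivity)]
    nlinarith
  have hbρ : (r - h * m / (m + 2)) ^ 2 + ρ ^ 2 ≤ r ^ 2 := by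
    rw [hρ]
    field_simp
    nlinarith [mul_nonneg (mul_nonneg h0 (sq_nonneg (m : ℝ))) (sub_nonneg.2 hhr)]
  convert mul_pow_mul_volume_le_toReal_volume_cap hu (h0.trans hhr) (sub_nonneg.2 hhr) hb hρ0 hbρ
    using 2
  field_simp
  ring

theorem stmt16 {n : ℕ} (hn : 1 ≤ n) (u : EuclideanSpace ℝ (Fin n)) (hu : ‖u‖ = 1)
    (r h : ℝ) (hr : 0 < r) (h0 : 0 < h) (hhr : h ≤ r) :
    (volume (closedBall (0 : EuclideanSpace ℝ (Fin (n - 1))) 1)).toReal / (n + 1) *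
        (2 * r / Real.pi) ^ n * (2 * h / r) ^ (((n : ℝ) + 1) / 2) ≤
      (volume {x : EuclideanSpace ℝ (Fin n) | ‖x‖ ≤ r ∧ r - h ≤ ⟪u, x⟫}).toReal := by
  obtain ⟨m, rfl⟩ : ∃ m, n = m + 1 := ⟨n - 1, by omega⟩
  rw [Nat.add_sub_cancel]
  set ω := (volume (closedBall (0 : EuclideanSpace ℝ (Fin m)) 1)).toReal
  set s := √(2 * h / r)
  set κ := √(m * (m + 4) / 2) / (m + 2 : ℝ)
  have hs : s ^ 2 = 2 * h / r := sq_sqrt (by positivity)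
  have hρ : (r * s * κ) ^ 2 = h * r * m * (m + 4) / (m + 2) ^ 2 := by
    rw [mul_pow, mul_pow, hs, div_pow, sq_sqrt (by positivity)]
    field_simp
  have hrpow : (2 * h / r) ^ ((((m + 1 : ℕ) : ℝ) + 1) / 2) = s ^ (m + 2) := by
    rw [rpow_div_two_eq_sqrt _ (by positivity), ← rpow_natCast]
    congr 1
    push_cast
    ring
  calc _ = ω / (m + 2) * (r ^ (m + 1) * s ^ (m + 2)) * (2 / π) ^ (m + 1) := by
        rw [hrpow]
        push_cast
        ring
    _ ≤ ω / (m + 2) * (r ^ (m + 1) * s ^ (m + 2)) * κ ^ m := by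
        gcongr
        exact two_div_pi_pow_succ_le m
    _ = 2 * h / (m + 2) * (r * s * κ) ^ m * ω := by
        rw [show 2 * h = r * s ^ 2 by rw [hs]; field_simp]
        ring
    _ ≤ _ := two_mul_div_mul_pow_mul_volume_le_toReal_volume_cap hu h0.le hhr (by positivity) hρ
end

section
/- Let n ≥ 1, let u ∈ ℝⁿ be a unit vector, let r > 0, and let 0 ≤ t ≤ r. Then the Lebesgue measure of the spherical cap {x ∈ ℝⁿ : |x| ≤ r, ⟨u, x⟩ ≥ r − t} is at most (ω_{n−1} · π^{n+1} · rⁿ/(n+1)) · (t/(2r))^{(n+1)/2}, where ω_{n−1} is the Lebesgue measure of the closed unit ball in ℝⁿ⁻¹. -/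
/-!
Choose an orthonormal basis whose first vector is `u`. A point of the cap has first coordinate
`y₀ ∈ [r - t, r]` and the remaining coordinates have squared norm at most
`r² - (r - t)² ≤ 2rt`, so the cap lies in a cylinder of height `t` over an `(n - 1)`-ball of
radius `√(2rt)`. The volume of that cylinder is `(2r)ⁿ (t / 2r)^((n + 1) / 2) ω_{n-1}`, and the
claim reduces to `(n + 1) 2ⁿ ≤ πⁿ⁺¹`.
-/

open MeasureTheory Metric
open scoped RealInnerProductSpace

namespace EuclideanSpace

theorem measurePreserving_head_tail (m : ℕ) :
    MeasurePreserving
      (fun y : EuclideanSpace ℝ (Fin (m + 1)) => (y 0, WithLp.toLp 2 (Fin.tail y))) := by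
  have hsplit := (volume_preserving_piFinSuccAbove (fun _ : Fin (m + 1) => ℝ) 0).comp
    (PiLp.volume_preserving_ofLp (Fin (m + 1)))
  have htoLp : MeasurePreserving (Prod.map id (WithLp.toLp 2))
      (volume : Measure (ℝ × (Fin m → ℝ))) volume := by
    rw [Measure.volume_eq_prod, Measure.volume_eq_prod]
    exact (MeasurePreserving.id volume).prod (PiLp.volume_preserving_toLp (Fin m))
  exact htoLp.comp hsplit

theorem norm_sq_eq_head_tail {m : ℕ} (y : EuclideanSpace ℝ (Fin (m + 1))) :
    ‖y‖ ^ 2 = y 0 ^ 2 + ‖WithLp.toLp 2 (Fin.tail y)‖ ^ 2 := by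
  simp [EuclideanSpace.norm_sq_eq, Fin.sum_univ_succ, Fin.tail]

end EuclideanSpace

section Cap

variable {E : Type*} [NormedAddCommGroup E] [InnerProductSpace ℝ E] [FiniteDimensional ℝ E]

theorem exists_orthonormalBasis_apply_eq {ι : Type*} [Fintype ι]
    (hcard : Module.finrank ℝ E = Fintype.card ι) (i : ι) {u : E} (hu : ‖u‖ = 1) :
    ∃ b : OrthonormalBasis ι ℝ E, b i = u := by
  have hu' : Orthonormal ℝ (({i} : Set ι).domRestrict fun _ => u) :=
    orthonormal_subsingleton_iff.2 fun _ => hu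
  obtain ⟨b, hb⟩ := hu'.exists_orthonormalBasis_extension_of_card_eq hcard
  exact ⟨b, hb i rfl⟩

theorem volume_cap_le_mul_volume_closedBall [MeasurableSpace E] [BorelSpace E] {m : ℕ}
    (hE : Module.finrank ℝ E = m + 1) {u : E} (hu : ‖u‖ = 1) {r t : ℝ} (htr : t ≤ r) :
    volume {x : E | ‖x‖ ≤ r ∧ r - t ≤ ⟪u, x⟫} ≤
      ENNReal.ofReal t * volume (closedBall (0 : EuclideanSpace ℝ (Fin m)) √(2 * r * t)) := by
  obtain ⟨b, hb⟩ := exists_orthonormalBasis_apply_eq (hE.trans (Fintype.card_fin _).symm) 0 hu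
  set cylinder := Set.Icc (r - t) r ×ˢ closedBall (0 : EuclideanSpace ℝ (Fin m)) √(2 * r * t)
  have hΦ := (EuclideanSpace.measurePreserving_head_tail m).comp b.measurePreserving_repr
  have hcap : {x : E | ‖x‖ ≤ r ∧ r - t ≤ ⟪u, x⟫} ⊆
      ((fun y : EuclideanSpace ℝ (Fin (m + 1)) => (y 0, WithLp.toLp 2 (Fin.tail y))) ∘ b.repr) ⁻¹'
        cylinder := by
    rintro x ⟨hxr, hxu⟩
    set y := b.repr x
    have hy0 : ⟪u, x⟫ = y 0 := by rw [← hb, b.repr_apply_apply]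
    have hy : y 0 ^ 2 + ‖WithLp.toLp 2 (Fin.tail y)‖ ^ 2 ≤ r ^ 2 := by
      rw [← EuclideanSpace.norm_sq_eq_head_tail, b.repr.norm_map]
      exact pow_le_pow_left₀ (norm_nonneg x) hxr 2
    have hr : 0 ≤ r := (norm_nonneg x).trans hxr
    show y 0 ∈ Set.Icc (r - t) r ∧ WithLp.toLp 2 (Fin.tail y) ∈ closedBall 0 √(2 * r * t)
    rw [hy0] at hxu
    have hy0r : y 0 ≤ r := by nlinarith [sq_nonneg ‖WithLp.toLp 2 (Fin.tail y)‖]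
    have hsq : (r - t) ^ 2 ≤ y 0 ^ 2 := pow_le_pow_left₀ (by linarith) hxu 2
    rw [Set.mem_Icc, mem_closedBall_zero_iff, Real.le_sqrt (norm_nonneg _)]
    · exact ⟨⟨hxu, hy0r⟩, by nlinarith⟩
    · nlinarith
  calc volume {x : E | ‖x‖ ≤ r ∧ r - t ≤ ⟪u, x⟫}
      ≤ volume (_ ⁻¹' cylinder) := measure_mono hcap
    _ = volume cylinder :=
        hΦ.measure_preimage (measurableSet_Icc.prod measurableSet_closedBall).nullMeasurableSet
    _ = _ := by rw [Measure.volume_eq_prod, Measure.prod_prod, Real.volume_Icc, sub_sub_cancel]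

end Cap

theorem add_two_mul_two_pow_le_three_pow (n : ℕ) : (n + 2) * 2 ^ n ≤ 3 ^ (n + 1) := by
  induction n with
  | zero => norm_num
  | succ n ih => rw [pow_succ, pow_succ 3]; nlinarith [Nat.zero_le (n * 2 ^ n)]

theorem add_one_mul_two_pow_le_pi_pow (n : ℕ) : ((n : ℝ) + 1) * 2 ^ n ≤ Real.pi ^ (n + 1) :=
  calc ((n : ℝ) + 1) * 2 ^ n ≤ ((n + 2) * 2 ^ n : ℕ) := by push_cast; gcongr; norm_num
    _ ≤ (3 ^ (n + 1) : ℕ) := by exact_mod_cast add_two_mul_two_pow_le_three_pow n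
    _ ≤ Real.pi ^ (n + 1) := by push_cast; gcongr; exact Real.pi_gt_three.le

theorem mul_sqrt_pow_pred_eq {n : ℕ} (hn : 1 ≤ n) {r t : ℝ} (hr : 0 < r) (ht : 0 ≤ t) :
    t * √(2 * r * t) ^ (n - 1) = (2 * r) ^ n * (t / (2 * r)) ^ (((n : ℝ) + 1) / 2) := by
  obtain ⟨m, rfl⟩ := Nat.exists_eq_add_of_le' hn
  set s := t / (2 * r)
  have hs : 0 ≤ s := by positivity
  have hts : t = 2 * r * s := by simp only [s]; field_simp
  have hsqrt : √(2 * r * t) = 2 * r * √s := by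
    rw [hts, ← mul_assoc, Real.sqrt_mul (by positivity), Real.sqrt_mul_self (by positivity)]
  have hrpow : s ^ ((((m + 1 : ℕ) : ℝ) + 1) / 2) = √s ^ (m + 2) := by
    rw [Real.sqrt_eq_rpow, ← Real.rpow_natCast, ← Real.rpow_mul hs]
    push_cast; ring_nf
  rw [hrpow, hsqrt, Nat.add_sub_cancel, hts, mul_pow, pow_add √s, Real.sq_sqrt hs]
  ring

theorem mul_sqrt_pow_pred_le {n : ℕ} (hn : 1 ≤ n) {r t : ℝ} (hr : 0 < r) (ht : 0 ≤ t) :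
    t * √(2 * r * t) ^ (n - 1) ≤
      Real.pi ^ (n + 1) * r ^ n / (n + 1) * (t / (2 * r)) ^ (((n : ℝ) + 1) / 2) := by
  rw [mul_sqrt_pow_pred_eq hn hr ht]
  gcongr
  rw [le_div_iff₀ (by positivity), mul_pow]
  nlinarith [add_one_mul_two_pow_le_pi_pow n, pow_pos hr n]

theorem stmt17 {n : ℕ} (hn : 1 ≤ n) (u : EuclideanSpace ℝ (Fin n)) (hu : ‖u‖ = 1)
    (r t : ℝ) (hr : 0 < r) (h0 : 0 ≤ t) (htr : t ≤ r) :
    (volume {x : EuclideanSpace ℝ (Fin n) | ‖x‖ ≤ r ∧ r - t ≤ ⟪u, x⟫}).toReal ≤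
      (volume (closedBall (0 : EuclideanSpace ℝ (Fin (n - 1))) 1)).toReal *
        Real.pi ^ (n + 1) * r ^ n / (n + 1) * (t / (2 * r)) ^ (((n : ℝ) + 1) / 2) := by
  have hdim : Module.finrank ℝ (EuclideanSpace ℝ (Fin n)) = n - 1 + 1 := by
    rw [finrank_euclideanSpace_fin, Nat.sub_add_cancel hn]
  have hcap := volume_cap_le_mul_volume_closedBall hdim hu htr
  rw [Measure.addHaar_closedBall' _ _ (Real.sqrt_nonneg _), finrank_euclideanSpace_fin] at hcap
  set ω := volume (closedBall (0 : EuclideanSpace ℝ (Fin (n - 1))) 1)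
  have hω : ω ≠ ⊤ := measure_closedBall_lt_top.ne
  calc (volume {x : EuclideanSpace ℝ (Fin n) | ‖x‖ ≤ r ∧ r - t ≤ ⟪u, x⟫}).toReal
      ≤ ω.toReal * (t * √(2 * r * t) ^ (n - 1)) := by
        refine (ENNReal.toReal_mono (by finiteness) hcap).trans_eq ?_
        rw [ENNReal.toReal_mul, ENNReal.toReal_mul, ENNReal.toReal_ofReal h0,
          ENNReal.toReal_ofReal (by positivity)]
        ring
    _ ≤ ω.toReal * (Real.pi ^ (n + 1) * r ^ n / (n + 1) * (t / (2 * r)) ^ (((n : ℝ) + 1) / 2)) :=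
        mul_le_mul_of_nonneg_left (mul_sqrt_pow_pred_le hn hr h0) ENNReal.toReal_nonneg
    _ = _ := by ring
end
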